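/- arXiv:1503.04093 — 2 statements merged into one kernel-verified Lean document; each statement's English description precedes it below -/
import Mathlib

section
/- Under the strict-feasibility assumption (there exists a Borel probability measure F on X with ∫ g_i dF < ε_i for every i = 1,…,n), the robust planning value P*(ε) = sup_{b ∈ B} inf_{F ∈ 𝓕(ε)} ∫_X J(x,b) dF(x) equals the optimal value of the dual program: sup { −∑_{i=1}^n λ_i ε_i − η : b ∈ B, λ ∈ ℝ₊ⁿ, η ∈ ℝ, and J(x,b) + ∑_{i=1}^n λ_i g_i(x) + η ≥ 0 for all x ∈ X }. -/
/-!
For a fixed decision `b` the inner problem is a moment problem. The moment vectors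
`(∫ g dF, ∫ J(·, b) dF)` of probability measures form a convex set `M`, and no point of `M`
satisfies the constraints with a value below the inner infimum `p`. Separating `(ε, p)` from `M`
enlarged by the open positive orthant gives nonnegative multipliers `(λ, μ)`, Slater's condition
forces `μ > 0`, and testing the resulting inequality on Dirac measures yields a dual feasible
`(λ, η)` of value exactly `p`. So each inner infimum is attained as a dual value, while weak
duality bounds every dual value by an inner infimum; the two suprema therefore agree.
-/

open MeasureTheory Filter Topology Set
open scoped Pointwise

lemma le_of_forall_pos_le_add_smul {E : Type*} [AddCommGroup E] [Module ℝ E] [TopologicalSpace E]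
    [ContinuousAdd E] [ContinuousSMul ℝ E] {f : E → ℝ} (hf : Continuous f) {a w : E} {C : ℝ}
    (h : ∀ δ : ℝ, 0 < δ → f (a + δ • w) ≤ C) : f a ≤ C := by
  have hlim : Tendsto (fun δ : ℝ => f (a + δ • w)) (𝓝[>] 0) (𝓝 (f a)) := by
    have : Continuous fun δ : ℝ => f (a + δ • w) := by fun_prop
    simpa using (this.tendsto 0).mono_left nhdsWithin_le_nhds
  exact le_of_tendsto hlim (eventually_nhdsWithin_of_forall h)

lemma nonpos_of_forall_pos_mul_lt {a C : ℝ} (h : ∀ t : ℝ, 0 < t → t * a < C) : a ≤ 0 := by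
  by_contra! ha
  have := h (|C| / a + 1) (by positivity)
  rw [add_mul, div_mul_cancel₀ _ ha.ne', one_mul] at this
  linarith [le_abs_self C]

section LagrangeDuality

variable {ι : Type*} [Fintype ι]

theorem Convex.exists_nonpos_separating_strongDual {M : Set ((ι → ℝ) × ℝ)} (hM : Convex ℝ M)
    (hMne : M.Nonempty) {q : (ι → ℝ) × ℝ} (hq : ∀ m ∈ M, m.1 ≤ q.1 → q.2 ≤ m.2) :
    ∃ f : StrongDual ℝ ((ι → ℝ) × ℝ), f ≠ 0 ∧ (∀ v, 0 ≤ v → f v ≤ 0) ∧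
      ∀ m ∈ M, f m ≤ f q := by
  -- `M + U` is open, so the open-set Hahn–Banach theorem applies; since `U` is a cone on which
  -- `f` is bounded above, `f ≤ 0` on `U`, hence on its closure, the nonnegative orthant.
  set U : Set ((ι → ℝ) × ℝ) := (univ.pi fun _ => Ioi 0) ×ˢ Ioi 0
  have hshift : ∀ v : (ι → ℝ) × ℝ, 0 ≤ v → ∀ δ : ℝ, 0 < δ → v + δ • 1 ∈ U := fun v hv δ hδ =>
    ⟨fun i _ => by simpa using add_pos_of_nonneg_of_pos (hv.1 i) hδ, by
      simpa using add_pos_of_nonneg_of_pos hv.2 hδ⟩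
  have hUsmul : ∀ u ∈ U, ∀ t : ℝ, 0 < t → t • u ∈ U := fun u hu t ht =>
    ⟨fun i _ => mul_pos ht (hu.1 i trivial), mul_pos ht hu.2⟩
  have hqU : q ∉ M + U := by
    rintro ⟨m, hm, u, hu, rfl⟩
    have := hq m hm fun i => le_add_of_nonneg_right (hu.1 i trivial).le
    exact (lt_add_of_pos_right m.2 hu.2).not_ge this
  obtain ⟨f, hf⟩ := geometric_hahn_banach_open_point
    (hM.add ((convex_pi fun _ _ => convex_Ioi 0).prod (convex_Ioi 0)))
    (((isOpen_set_pi finite_univ fun _ _ => isOpen_Ioi).prod isOpen_Ioi).add_left) hqU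
  have hsep : ∀ m ∈ M, ∀ u ∈ U, f m + f u < f q := fun m hm u hu => by
    simpa using hf _ (add_mem_add hm hu)
  obtain ⟨m₀, hm₀⟩ := hMne
  have hfU : ∀ u ∈ U, f u ≤ 0 := fun u hu =>
    nonpos_of_forall_pos_mul_lt (C := f q - f m₀) fun t ht => by
      simpa [lt_sub_iff_add_lt'] using hsep m₀ hm₀ _ (hUsmul u hu t ht)
  refine ⟨f, ?_, fun v hv => ?_, fun m hm => ?_⟩
  · rintro rfl
    simpa using hsep m₀ hm₀ _ (hshift 0 le_rfl 1 one_pos)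
  · exact le_of_forall_pos_le_add_smul f.continuous fun δ hδ => hfU _ (hshift v hv δ hδ)
  · refine le_of_forall_pos_le_add_smul f.continuous (w := 1) fun δ hδ => ?_
    simpa using (hsep m hm _ (hshift 0 le_rfl δ hδ)).le

theorem LinearMap.apply_pi_prod_eq_sum [DecidableEq ι] (f : (ι → ℝ) × ℝ →ₗ[ℝ] ℝ) (y : ι → ℝ)
    (r : ℝ) :
    f (y, r) = ∑ i, f (Pi.single i 1, 0) * y i + f (0, 1) * r := by
  have hy : ((y, 0) : (ι → ℝ) × ℝ) = ∑ i, y i • ((Pi.single i 1 : ι → ℝ), (0 : ℝ)) := by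
    ext j <;> simp [Prod.fst_sum, Prod.snd_sum, Pi.single_apply]
  have hyr : ((y, r) : (ι → ℝ) × ℝ) = (y, 0) + r • (0, 1) := by ext <;> simp
  simp only [hyr, map_add, hy, map_sum, map_smul, smul_eq_mul, mul_comm]

theorem Convex.exists_lagrangeMultipliers_of_slater {M : Set ((ι → ℝ) × ℝ)} (hM : Convex ℝ M)
    {ε : ι → ℝ} {p : ℝ} (hp : ∀ m ∈ M, m.1 ≤ ε → p ≤ m.2)
    (hslater : ∃ m ∈ M, ∀ i, m.1 i < ε i) :
    ∃ lam : ι → ℝ, 0 ≤ lam ∧ ∀ m ∈ M, p + ∑ i, lam i * ε i ≤ m.2 + ∑ i, lam i * m.1 i := by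
  classical
  obtain ⟨m₀, hm₀, hm₀ε⟩ := hslater
  obtain ⟨f, hf0, hfneg, hfM⟩ :=
    hM.exists_nonpos_separating_strongDual ⟨m₀, hm₀⟩ (q := (ε, p)) hp
  set lam : ι → ℝ := fun i => -f (Pi.single i 1, 0)
  set μ : ℝ := -f (0, 1)
  have hf : ∀ y r, f (y, r) = -(∑ i, lam i * y i) - μ * r := fun y r => by
    rw [← f.coe_coe, f.toLinearMap.apply_pi_prod_eq_sum]
    simp [lam, μ, Finset.sum_neg_distrib]
  have hlam : 0 ≤ lam := fun i => neg_nonneg.2 (hfneg _ ⟨by simp, le_rfl⟩)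
  have hμ : 0 ≤ μ := neg_nonneg.2 (hfneg _ ⟨le_rfl, zero_le_one⟩)
  have hμM : ∀ m ∈ M, μ * p + ∑ i, lam i * ε i ≤ μ * m.2 + ∑ i, lam i * m.1 i := fun m hm => by
    have := hfM m hm
    rw [← Prod.mk.eta (p := m), hf, hf] at this
    linarith
  have hμpos : 0 < μ := by
    refine hμ.lt_of_ne' fun hμ0 => hf0 ?_
    have hlam0 : lam = 0 := by
      by_contra hne
      obtain ⟨i, hi⟩ := Function.ne_iff.1 hne
      have hlt : ∑ i, lam i * m₀.1 i < ∑ i, lam i * ε i :=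
        Finset.sum_lt_sum (fun j _ => mul_le_mul_of_nonneg_left (hm₀ε j).le (hlam j))
          ⟨i, Finset.mem_univ _, mul_lt_mul_of_pos_left (hm₀ε i) ((hlam i).lt_of_ne' hi)⟩
      have := hμM m₀ hm₀
      rw [hμ0] at this
      linarith
    exact ContinuousLinearMap.ext fun ⟨y, r⟩ => by simp [hf, hlam0, hμ0]
  refine ⟨μ⁻¹ • lam, fun i => mul_nonneg (inv_nonneg.2 hμ) (hlam i), fun m hm => ?_⟩
  have := mul_le_mul_of_nonneg_left (hμM m hm) (inv_nonneg.2 hμ)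
  simp only [Pi.smul_apply, smul_eq_mul, mul_assoc, ← Finset.mul_sum]
  rwa [mul_add, mul_add, ← mul_assoc, ← mul_assoc, inv_mul_cancel₀ hμpos.ne', one_mul,
    one_mul] at this

end LagrangeDuality

section Moments

variable {X : Type*} [MeasurableSpace X] {ι : Type*}

theorem isProbabilityMeasure_ofReal_smul_add_ofReal_smul {F₁ F₂ : Measure X}
    [IsProbabilityMeasure F₁] [IsProbabilityMeasure F₂] {t s : ℝ} (ht : 0 ≤ t) (hs : 0 ≤ s)
    (hts : t + s = 1) : IsProbabilityMeasure (ENNReal.ofReal t • F₁ + ENNReal.ofReal s • F₂) :=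
  ⟨by simp [← ENNReal.ofReal_add ht hs, hts]⟩

theorem integral_ofReal_smul_add_ofReal_smul_measure {F₁ F₂ : Measure X} {h : X → ℝ}
    (h₁ : Integrable h F₁) (h₂ : Integrable h F₂) {t s : ℝ} (ht : 0 ≤ t) (hs : 0 ≤ s) :
    ∫ x, h x ∂(ENNReal.ofReal t • F₁ + ENNReal.ofReal s • F₂) =
      t * ∫ x, h x ∂F₁ + s * ∫ x, h x ∂F₂ := by
  rw [integral_add_measure (h₁.smul_measure ENNReal.ofReal_ne_top)
    (h₂.smul_measure ENNReal.ofReal_ne_top), integral_smul_measure, integral_smul_measure,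
    ENNReal.toReal_ofReal ht, ENNReal.toReal_ofReal hs, smul_eq_mul, smul_eq_mul]

theorem neg_sum_mul_sub_le_integral [Fintype ι] {F : Measure X} [IsProbabilityMeasure F]
    {φ : X → ℝ} {g : ι → X → ℝ} (hφ : Integrable φ F) (hg : ∀ i, Integrable (g i) F)
    {ε lam : ι → ℝ} {η : ℝ} (hlam : 0 ≤ lam) (hcert : ∀ x, 0 ≤ φ x + ∑ i, lam i * g i x + η)
    (hF : ∀ i, ∫ x, g i x ∂F ≤ ε i) :
    -(∑ i, lam i * ε i) - η ≤ ∫ x, φ x ∂F := by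
  have hpos : 0 ≤ ∫ x, (φ x + ∑ i, lam i * g i x + η) ∂F := integral_nonneg hcert
  have hlamg : ∀ i, Integrable (fun x => lam i * g i x) F := fun i => (hg i).const_mul _
  have hsum : Integrable (fun x => ∑ i, lam i * g i x) F :=
    integrable_finsetSum _ fun i _ => hlamg i
  rw [integral_add (f := fun x => φ x + ∑ i, lam i * g i x) (hφ.add hsum) (integrable_const η),
    integral_add hφ hsum, integral_finsetSum _ fun i _ => hlamg i] at hpos
  simp only [integral_const_mul, integral_const, probReal_univ, one_smul] at hpos
  have : ∑ i, lam i * ∫ x, g i x ∂F ≤ ∑ i, lam i * ε i :=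
    Finset.sum_le_sum fun i _ => mul_le_mul_of_nonneg_left (hF i) (hlam i)
  linarith

theorem Continuous.integrable_of_compactSpace [TopologicalSpace X] [CompactSpace X]
    [OpensMeasurableSpace X] {μ : Measure X} [IsFiniteMeasure μ] {h : X → ℝ}
    (hh : Continuous h) : Integrable h μ :=
  hh.integrable_of_hasCompactSupport (HasCompactSupport.of_compactSpace h)

def momentSet (g : ι → X → ℝ) (φ : X → ℝ) : Set ((ι → ℝ) × ℝ) :=
  {m | ∃ F : Measure X, IsProbabilityMeasure F ∧ m = (fun i => ∫ x, g i x ∂F, ∫ x, φ x ∂F)}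

variable [TopologicalSpace X] [CompactSpace X] [OpensMeasurableSpace X]
  {g : ι → X → ℝ} {φ : X → ℝ}

theorem convex_momentSet (hg : ∀ i, Continuous (g i)) (hφ : Continuous φ) :
    Convex ℝ (momentSet g φ) := by
  rintro _ ⟨F₁, hF₁, rfl⟩ _ ⟨F₂, hF₂, rfl⟩ t s ht hs hts
  refine ⟨ENNReal.ofReal t • F₁ + ENNReal.ofReal s • F₂,
    isProbabilityMeasure_ofReal_smul_add_ofReal_smul ht hs hts, ?_⟩
  simp only [integral_ofReal_smul_add_ofReal_smul_measure (hg _).integrable_of_compactSpace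
    (hg _).integrable_of_compactSpace ht hs, integral_ofReal_smul_add_ofReal_smul_measure
    hφ.integrable_of_compactSpace hφ.integrable_of_compactSpace ht hs]
  rfl

theorem exists_dual_certificate_of_slater [Fintype ι] (hg : ∀ i, Continuous (g i))
    (hφ : Continuous φ) {ε : ι → ℝ}
    (hslater : ∃ F : Measure X, IsProbabilityMeasure F ∧ ∀ i, ∫ x, g i x ∂F < ε i) :
    ∃ lam : ι → ℝ, ∃ η : ℝ, 0 ≤ lam ∧ (∀ x, 0 ≤ φ x + ∑ i, lam i * g i x + η) ∧
      ⨅ F : {F : Measure X // IsProbabilityMeasure F ∧ ∀ i, ∫ x, g i x ∂F ≤ ε i},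
        ∫ x, φ x ∂F.1 = -(∑ i, lam i * ε i) - η := by
  obtain ⟨F₀, hF₀, hF₀g⟩ := hslater
  set p := ⨅ F : {F : Measure X // IsProbabilityMeasure F ∧ ∀ i, ∫ x, g i x ∂F ≤ ε i},
    ∫ x, φ x ∂F.1
  obtain ⟨C, hC⟩ := (isCompact_range hφ).bddBelow
  have hbdd : BddBelow (range fun F : {F : Measure X // IsProbabilityMeasure F ∧
      ∀ i, ∫ x, g i x ∂F ≤ ε i} => ∫ x, φ x ∂F.1) := by
    refine ⟨C, ?_⟩
    rintro _ ⟨⟨F, hF, hFg⟩, rfl⟩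
    -- a lower bound `C` of `φ` is a dual certificate with `λ = 0`
    simpa using neg_sum_mul_sub_le_integral (ε := ε) (lam := 0) (η := -C)
      hφ.integrable_of_compactSpace (fun i => (hg i).integrable_of_compactSpace) le_rfl
      (fun x => by simpa using hC ⟨x, rfl⟩) hFg
  have hp : ∀ m ∈ momentSet g φ, m.1 ≤ ε → p ≤ m.2 := by
    rintro _ ⟨F, hF, rfl⟩ hFg
    exact ciInf_le hbdd ⟨F, hF, hFg⟩
  obtain ⟨lam, hlam, hmult⟩ := (convex_momentSet hg hφ).exists_lagrangeMultipliers_of_slater hp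
    ⟨_, ⟨F₀, hF₀, rfl⟩, hF₀g⟩
  refine ⟨lam, -(p + ∑ i, lam i * ε i), hlam, fun x => ?_, by ring⟩
  have := hmult _ ⟨Measure.dirac x, inferInstance, rfl⟩
  simp only [integral_dirac' _ _ (hg _).stronglyMeasurable,
    integral_dirac' _ _ hφ.stronglyMeasurable] at this
  linarith

end Moments

theorem robust_planning_strong_duality_general
    (X : Set ℝ) (hXcpt : IsCompact X)
    (B : Set ℝ)
    (J : ℝ → ℝ → ℝ)
    (hJcont : ContinuousOn (fun p : ℝ × ℝ => J p.1 p.2) (X ×ˢ B))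
    (n : ℕ) (g : Fin n → ℝ → ℝ) (hg : ∀ i, ContinuousOn (g i) X)
    (ε : Fin n → ℝ)
    (hstrict : ∃ F : Measure X, IsProbabilityMeasure F ∧
      ∀ i, (∫ x, g i (x : ℝ) ∂F) < ε i) :
    (⨆ b : B, ⨅ F : {F : Measure X // IsProbabilityMeasure F ∧
        ∀ i, (∫ x, g i (x : ℝ) ∂F) ≤ ε i}, ∫ x, J (x : ℝ) (b : ℝ) ∂F.1) =
    sSup {v : ℝ | ∃ b ∈ B, ∃ lam : Fin n → ℝ, ∃ η : ℝ,
      (∀ i, 0 ≤ lam i) ∧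
      (∀ x ∈ X, 0 ≤ J x b + (∑ i, lam i * g i x) + η) ∧
      v = -(∑ i, lam i * ε i) - η} := by
  have := isCompact_iff_compactSpace.mp hXcpt
  have hgX : ∀ i, Continuous fun x : X => g i x := fun i => (hg i).domRestrict
  have hJX : ∀ b ∈ B, Continuous fun x : X => J x b := fun b hb =>
    hJcont.comp_continuous (continuous_subtype_val.prodMk continuous_const) fun x => ⟨x.2, hb⟩
  obtain ⟨F₀, hF₀, hF₀g⟩ := hstrict
  have : Nonempty {F : Measure X // IsProbabilityMeasure F ∧ ∀ i, ∫ x, g i x ∂F ≤ ε i} :=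
    ⟨⟨F₀, hF₀, fun i => (hF₀g i).le⟩⟩
  refine csSup_eq_csSup_of_forall_exists_le ?_ ?_
  · rintro _ ⟨⟨b, hb⟩, rfl⟩
    obtain ⟨lam, η, hlam, hcert, hval⟩ :=
      exists_dual_certificate_of_slater hgX (hJX b hb) ⟨F₀, hF₀, hF₀g⟩
    exact ⟨_, ⟨b, hb, lam, η, hlam, fun x hx => hcert ⟨x, hx⟩, hval⟩, le_rfl⟩
  · rintro _ ⟨b, hb, lam, η, hlam, hcert, rfl⟩
    refine ⟨_, ⟨⟨b, hb⟩, rfl⟩, le_ciInf fun ⟨F, hF, hFg⟩ => ?_⟩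
    exact neg_sum_mul_sub_le_integral (hJX b hb).integrable_of_compactSpace
      (fun i => (hgX i).integrable_of_compactSpace) hlam (fun x => hcert x x.2) hFg

/-- Strong duality for the robust planning problem under strict feasibility. -/
theorem robust_planning_strong_duality
    (X : Set ℝ) (hXne : X.Nonempty) (hXcpt : IsCompact X)
    (B : Set ℝ) (hBne : B.Nonempty) (hBconv : Convex ℝ B)
    (J : ℝ → ℝ → ℝ)
    (hJcont : ContinuousOn (fun p : ℝ × ℝ => J p.1 p.2) (X ×ˢ B))
    (hJconc_b : ∀ x ∈ X, ConcaveOn ℝ B (fun b => J x b))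
    (hJconc_x : ∀ b ∈ B, ConcaveOn ℝ X (fun x => J x b))
    (n : ℕ) (g : Fin n → ℝ → ℝ) (hg : ∀ i, ContinuousOn (g i) X)
    (ε : Fin n → ℝ)
    (hstrict : ∃ F : Measure X, IsProbabilityMeasure F ∧
      ∀ i, (∫ x, g i (x : ℝ) ∂F) < ε i) :
    (⨆ b : B, ⨅ F : {F : Measure X // IsProbabilityMeasure F ∧
        ∀ i, (∫ x, g i (x : ℝ) ∂F) ≤ ε i}, ∫ x, J (x : ℝ) (b : ℝ) ∂F.1) =
    sSup {v : ℝ | ∃ b ∈ B, ∃ lam : Fin n → ℝ, ∃ η : ℝ,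
      (∀ i, 0 ≤ lam i) ∧
      (∀ x ∈ X, 0 ≤ J x b + (∑ i, lam i * g i x) + η) ∧
      v = -(∑ i, lam i * ε i) - η} :=
  robust_planning_strong_duality_general X hXcpt B J hJcont n g hg ε hstrict
end

section
/- (Reduction of the prediction-interval dual program to finitely many constraints.) Let 0 = x_0 < x_1 < ⋯ < x_m = 1 be a partition of [0,1], with intervals I_i = [x_{i−1}, x_i) for i = 1,…,m−1 and I_m = [x_{m−1}, 1]. Then the optimal value of: maximize over b ∈ B, λ̄, λ̲ ∈ ℝ₊^m, η ∈ ℝ of ∑_{i=1}^m ( λ̲_i δ̲_i − λ̄_i δ̄_i ) − η subject to J(x,b) + ∑_{i=1}^m ( λ̄_i − λ̲_i ) 𝟙{I_i}(x) + η ≥ 0 for all x ∈ [0,1], equals the optimal value of the finite program: maximize the same objective over the same variables subject to the 2m constraints J(x_{i−1},b) + λ̄_i − λ̲_i + η ≥ 0 and J(x_i,b) + λ̄_i − λ̲_i + η ≥ 0 for i = 1,…,m. -/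
/-!
Both programs have the same variables and objective, so it suffices that their feasible sets
coincide. On each cell `I_i` the semi-infinite constraint involves only `λ̄_i - λ̲_i`, and since
`x ↦ J x b` is concave its minimum over `[x_{i-1}, x_i]` is attained at an endpoint. Conversely the
constraint at the right endpoint `x_i ∉ I_i` (for `i < m`) follows from the constraint on `I_i` by
letting `x ↑ x_i`, using that a concave function is continuous on the interior of its domain.
-/

open Function Set Finset

/-- Indexed from `0`: `partitionCell xs i` is the paper's `I_{i+1}`. -/
def partitionCell {m : ℕ} (xs : Fin (m + 1) → ℝ) (i : Fin m) : Set ℝ :=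
  if (i : ℕ) + 1 = m then Set.Icc (xs i.castSucc) (xs i.succ)
  else Set.Ico (xs i.castSucc) (xs i.succ)

theorem sum_mul_indicator_of_mem {ι α R : Type*} [Fintype ι] [NonAssocSemiring R]
    {s : ι → Set α} (hs : Pairwise (Disjoint on s)) (c : ι → R) {x : α} {j : ι}
    (hx : x ∈ s j) : ∑ i, c i * (s i).indicator (fun _ => (1 : R)) x = c j := by
  refine (Fintype.sum_eq_single j fun i hij => ?_).trans (by simp [hx])
  rw [indicator_of_notMem ((hs hij).notMem_of_mem_right hx), mul_zero]

namespace partitionCell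

variable {m : ℕ} {xs : Fin (m + 1) → ℝ}

theorem subset_Icc (i : Fin m) : partitionCell xs i ⊆ Icc (xs i.castSucc) (xs i.succ) := by
  unfold partitionCell
  split_ifs
  exacts [subset_rfl, Ico_subset_Icc_self]

theorem Ico_subset (i : Fin m) : Ico (xs i.castSucc) (xs i.succ) ⊆ partitionCell xs i := by
  unfold partitionCell
  split_ifs
  exacts [Ico_subset_Icc_self, subset_rfl]

theorem left_mem (hxs : StrictMono xs) (i : Fin m) : xs i.castSucc ∈ partitionCell xs i :=
  Ico_subset i (left_mem_Ico.2 (hxs i.castSucc_lt_succ))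

theorem pairwise_disjoint (hxs : StrictMono xs) : Pairwise (Disjoint on partitionCell xs) := by
  refine (pairwise_disjoint_on _).2 fun i j hij => Set.disjoint_left.2 fun x hxi hxj => ?_
  have hi : (i : ℕ) + 1 ≠ m := by omega
  rw [partitionCell, if_neg hi] at hxi
  have : xs i.succ ≤ xs j.castSucc := hxs.monotone (Fin.succ_le_castSucc_iff.2 hij)
  linarith [hxi.2, (subset_Icc j hxj).1]

theorem exists_mem (hm : 0 < m) (hxs : Monotone xs) {x : ℝ}
    (hx : x ∈ Icc (xs 0) (xs (Fin.last m))) : ∃ i, x ∈ partitionCell xs i := by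
  obtain ⟨n, rfl⟩ := Nat.exists_eq_add_one_of_ne_zero hm.ne'
  -- `k` is the last node to the left of `x`
  obtain ⟨k, hk, hmax⟩ := ({k | xs k ≤ x} : Finset _).exists_max_image id ⟨0, by simpa using hx.1⟩
  rw [mem_filter] at hk
  obtain ⟨i, rfl⟩ | rfl := k.eq_castSucc_or_eq_last
  · refine ⟨i, Ico_subset i ⟨hk.2, ?_⟩⟩
    by_contra! h
    exact i.castSucc_lt_succ.not_ge (hmax _ (mem_filter.2 ⟨mem_univ _, h⟩))
  · refine ⟨Fin.last n, ?_⟩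
    rw [partitionCell, if_pos (by simp), Fin.succ_last]
    exact ⟨(hxs ((Fin.castSucc_lt_last _).le)).trans hk.2, hx.2⟩

end partitionCell

theorem ConcaveOn.nonneg_add_step_iff {m : ℕ} {xs : Fin (m + 1) → ℝ} {g : ℝ → ℝ}
    (hm : 0 < m) (hxs : StrictMono xs) (hg : ConcaveOn ℝ (Icc (xs 0) (xs (Fin.last m))) g)
    (c : Fin m → ℝ) :
    (∀ x ∈ Icc (xs 0) (xs (Fin.last m)),
        0 ≤ g x + ∑ i, c i * (partitionCell xs i).indicator (fun _ => 1) x) ↔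
      ∀ i, 0 ≤ g (xs i.castSucc) + c i ∧ 0 ≤ g (xs i.succ) + c i := by
  have hnode (k) : xs k ∈ Icc (xs 0) (xs (Fin.last m)) :=
    ⟨hxs.monotone (Fin.zero_le k), hxs.monotone (Fin.le_last k)⟩
  have hstep {x i} (hx : x ∈ partitionCell xs i) :
      ∑ j, c j * (partitionCell xs j).indicator (fun _ => 1) x = c i :=
    sum_mul_indicator_of_mem (partitionCell.pairwise_disjoint hxs) c hx
  constructor
  · intro h i
    have hcell : ∀ x ∈ partitionCell xs i, 0 ≤ g x + c i := fun x hx => by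
      have hxI := partitionCell.subset_Icc i hx
      simpa only [hstep hx] using h x ⟨(hnode _).1.trans hxI.1, hxI.2.trans (hnode _).2⟩
    have hlt : xs i.castSucc < xs i.succ := hxs i.castSucc_lt_succ
    refine ⟨hcell _ (partitionCell.left_mem hxs i), ?_⟩
    by_cases hlast : (i : ℕ) + 1 = m
    · rw [partitionCell, if_pos hlast] at hcell
      exact hcell _ (right_mem_Icc.2 hlt.le)
    -- otherwise `x_i` is interior to `[x_0, x_m]`, where the concave `g` is continuous
    have hint : xs i.succ ∈ interior (Icc (xs 0) (xs (Fin.last m))) := by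
      rw [interior_Icc]
      exact ⟨hxs (Fin.succ_pos i), hxs (by simp [Fin.lt_def]; omega)⟩
    have hcont : ContinuousWithinAt g (Ico (xs i.castSucc) (xs i.succ)) (xs i.succ) :=
      (hg.continuousOn_interior.continuousAt (isOpen_interior.mem_nhds hint)).continuousWithinAt
    exact ContinuousWithinAt.closure_le (f := fun _ => 0) (g := fun x => g x + c i)
      (by simp [closure_Ico hlt.ne, hlt.le]) continuousWithinAt_const
      (hcont.add continuousWithinAt_const) fun x hx => hcell x (partitionCell.Ico_subset i hx)
  · intro h x hx
    obtain ⟨i, hi⟩ := partitionCell.exists_mem hm hxs.monotone hx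
    rw [hstep hi]
    have hmin := hg.min_le_of_mem_Icc (hnode _) (hnode _) (partitionCell.subset_Icc i hi)
    linarith [le_min (neg_le_iff_add_nonneg.2 (h i).1) (neg_le_iff_add_nonneg.2 (h i).2)]

theorem prediction_interval_dual_reduction_general
    (m : ℕ)
    (B : Set ℝ)
    (J : ℝ → ℝ → ℝ)
    (hJconc_x : ∀ b ∈ B, ConcaveOn ℝ (Set.Icc (0 : ℝ) 1) (fun x => J x b))
    (xs : Fin (m + 1) → ℝ) (hmono : StrictMono xs)
    (hx0 : xs 0 = 0) (hxm : xs (Fin.last m) = 1)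
    (du dl : Fin m → ℝ)
    (I : Fin m → Set ℝ)
    (hI : ∀ i : Fin m, I i =
      if (i : ℕ) + 1 = m then Set.Icc (xs i.castSucc) (xs i.succ)
      else Set.Ico (xs i.castSucc) (xs i.succ)) :
    sSup {v : ℝ | ∃ b ∈ B, ∃ lu ll : Fin m → ℝ, ∃ η : ℝ,
      (∀ i, 0 ≤ lu i) ∧ (∀ i, 0 ≤ ll i) ∧
      (∀ x ∈ Set.Icc (0 : ℝ) 1,
        0 ≤ J x b + (∑ i, (lu i - ll i) * (I i).indicator (fun _ => (1 : ℝ)) x) + η) ∧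
      v = (∑ i, (ll i * dl i - lu i * du i)) - η} =
    sSup {v : ℝ | ∃ b ∈ B, ∃ lu ll : Fin m → ℝ, ∃ η : ℝ,
      (∀ i, 0 ≤ lu i) ∧ (∀ i, 0 ≤ ll i) ∧
      (∀ i : Fin m,
        0 ≤ J (xs i.castSucc) b + lu i - ll i + η ∧
        0 ≤ J (xs i.succ) b + lu i - ll i + η) ∧
      v = (∑ i, (ll i * dl i - lu i * du i)) - η} := by
  have hm : 0 < m := Nat.pos_of_ne_zero fun h => by subst h; exact zero_ne_one (hx0.symm.trans hxm)
  obtain rfl : I = partitionCell xs := funext hI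
  have hfeasible (b) (hb : b ∈ B) (lu ll : Fin m → ℝ) (η : ℝ) :
      (∀ x ∈ Icc (0 : ℝ) 1,
        0 ≤ J x b + (∑ i, (lu i - ll i) * (partitionCell xs i).indicator (fun _ => 1) x) + η) ↔
      ∀ i, 0 ≤ J (xs i.castSucc) b + lu i - ll i + η ∧ 0 ≤ J (xs i.succ) b + lu i - ll i + η := by
    have hconc := (hJconc_x b hb).add_const η
    rw [← hx0, ← hxm] at hconc
    simpa only [hx0, hxm, Pi.add_apply, add_sub_assoc, add_right_comm _ _ η] using
      hconc.nonneg_add_step_iff hm hmono (fun i => lu i - ll i)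
  congr 1
  ext v
  simp only [Set.mem_ofPred_eq]
  exact exists_congr fun b => and_congr_right fun hb =>
    exists₃_congr fun lu ll η => by rw [hfeasible b hb lu ll η]

/-- Reduction of the prediction-interval dual program (with a semi-infinite
constraint over all `x ∈ [0,1]`) to the finite program with the `2m` endpoint constraints:
the two optimal values coincide. -/
theorem prediction_interval_dual_reduction
    (m : ℕ) (hm : 0 < m)
    (B : Set ℝ) (hBne : B.Nonempty) (hBconv : Convex ℝ B)
    (J : ℝ → ℝ → ℝ)
    (hJcont : ContinuousOn (fun p : ℝ × ℝ => J p.1 p.2) (Set.Icc 0 1 ×ˢ B))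
    (hJconc_b : ∀ x ∈ Set.Icc (0 : ℝ) 1, ConcaveOn ℝ B (fun b => J x b))
    (hJconc_x : ∀ b ∈ B, ConcaveOn ℝ (Set.Icc (0 : ℝ) 1) (fun x => J x b))
    (xs : Fin (m + 1) → ℝ) (hmono : StrictMono xs)
    (hx0 : xs 0 = 0) (hxm : xs (Fin.last m) = 1)
    (du dl : Fin m → ℝ)
    (I : Fin m → Set ℝ)
    (hI : ∀ i : Fin m, I i =
      if (i : ℕ) + 1 = m then Set.Icc (xs i.castSucc) (xs i.succ)
      else Set.Ico (xs i.castSucc) (xs i.succ)) :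
    sSup {v : ℝ | ∃ b ∈ B, ∃ lu ll : Fin m → ℝ, ∃ η : ℝ,
      (∀ i, 0 ≤ lu i) ∧ (∀ i, 0 ≤ ll i) ∧
      (∀ x ∈ Set.Icc (0 : ℝ) 1,
        0 ≤ J x b + (∑ i, (lu i - ll i) * (I i).indicator (fun _ => (1 : ℝ)) x) + η) ∧
      v = (∑ i, (ll i * dl i - lu i * du i)) - η} =
    sSup {v : ℝ | ∃ b ∈ B, ∃ lu ll : Fin m → ℝ, ∃ η : ℝ,
      (∀ i, 0 ≤ lu i) ∧ (∀ i, 0 ≤ ll i) ∧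
      (∀ i : Fin m,
        0 ≤ J (xs i.castSucc) b + lu i - ll i + η ∧
        0 ≤ J (xs i.succ) b + lu i - ll i + η) ∧
      v = (∑ i, (ll i * dl i - lu i * du i)) - η} :=
  prediction_interval_dual_reduction_general m B J hJconc_x xs hmono hx0 hxm du dl I hI
end
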